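/- For all 0 < t ≤ 1 and all P, Q ∈ ℝ³, if d_E(P,Q) < 2t then ρ_t(P,Q) = d_E(P,Q). -/

import Mathlib

noncomputable section

/-- The unit 2-sphere in `ℝ³`, i.e. in `EuclideanSpace ℝ (Fin 3)`. -/
def S2 : Set (EuclideanSpace ℝ (Fin 3)) := Metric.sphere (0 : EuclideanSpace ℝ (Fin 3)) 1

/-- The angle parameter `α = arcsin ((√(2 - t²) - t) / 2)`. -/
def alphaAngle (t : ℝ) : ℝ := Real.arcsin ((Real.sqrt (2 - t ^ 2) - t) / 2)

/-- The metric `d_t` on the unit sphere: `d_t(P,Q) = d_E(P,Q)` if `∠POQ ≤ π - 2α`,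
and `d_t(P,Q) = 2t + d_E(-P,Q)` otherwise. -/
def dt (t : ℝ) (P Q : EuclideanSpace ℝ (Fin 3)) : ℝ :=
  if EuclideanGeometry.angle P (0 : EuclideanSpace ℝ (Fin 3)) Q ≤ Real.pi - 2 * alphaAngle t
  then dist P Q
  else 2 * t + dist (-P) Q

/-- A point on the unit sphere at Euclidean distance `r` (for `0 ≤ r ≤ 2`) from the
base point `spherePt 0 = (1,0,0)`. -/
def spherePt (r : ℝ) : EuclideanSpace ℝ (Fin 3) :=
  (WithLp.equiv 2 (Fin 3 → ℝ)).symm ![1 - r ^ 2 / 2, r * Real.sqrt (1 - r ^ 2 / 4), 0]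

/-- The value `d_t(ε⁻¹(X), ε⁻¹(Y))` for points `X, Y ∈ ℝ³` with `d_E(X,Y) ≤ 2`, computed
via the concrete pair of unit-sphere points `spherePt 0`, `spherePt (d_E(X,Y))` at the same
Euclidean distance; by invariance of `d_t` under Euclidean isometries this agrees with the
value obtained from any isometric embedding `ε : S² → ℝ³` whose image contains `X` and `Y`. -/
def dtChord (t r : ℝ) : ℝ := dt t (spherePt 0) (spherePt r)

/-- The set of values `∑_{i=1}^n d_t(X_{i-1}, X_i)` over all chains
`(X_0, …, X_n) ∈ Γ_{P,Q}`, i.e. chains from `P` to `Q` with all steps of Euclidean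
length at most `2`. -/
def chainSums (t : ℝ) (P Q : EuclideanSpace ℝ (Fin 3)) : Set ℝ :=
  { s : ℝ | ∃ n : ℕ, ∃ X : Fin (n + 1) → EuclideanSpace ℝ (Fin 3),
      X 0 = P ∧ X (Fin.last n) = Q ∧
      (∀ i : Fin n, dist (X i.castSucc) (X i.succ) ≤ 2) ∧
      s = ∑ i : Fin n, dtChord t (dist (X i.castSucc) (X i.succ)) }

/-- The metric `ρ_t(P,Q) = inf { ∑_{i=1}^n d_t(X_{i-1},X_i) | (X_0,…,X_n) ∈ Γ_{P,Q} }`. -/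
def rho (t : ℝ) (P Q : EuclideanSpace ℝ (Fin 3)) : ℝ := sInf (chainSums t P Q)

open Real

lemma antitone_arccos : Antitone Real.arccos := fun x y h => by
  simp only [Real.arccos_eq_pi_div_two_sub_arcsin]
  linarith [Real.monotone_arcsin h]

lemma dist_spherePt (r : ℝ) (h0 : 0 ≤ r) (h2 : r ≤ 2) :
    dist (spherePt 0) (spherePt r) = r := by
  have h4 : (0:ℝ) ≤ 1 - r^2/4 := by nlinarith
  have hs := Real.sq_sqrt h4
  rw [EuclideanSpace.dist_eq]
  simp only [spherePt, WithLp.equiv_symm_apply, WithLp.ofLp_toLp, PiLp.toLp_apply, Fin.sum_univ_three,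
    Matrix.cons_val_zero, Matrix.cons_val_one, Matrix.head_cons,
    Matrix.cons_val_two, Matrix.tail_cons, Real.dist_eq]
  rw [show |1 - 0 ^ 2 / 2 - (1 - r ^ 2 / 2)| ^ 2 + |0 * √(1 - 0 ^ 2 / 4) - r * √(1 - r ^ 2 / 4)| ^ 2
      + |(0:ℝ) - 0| ^ 2 = r ^ 2 from by rw [sq_abs, sq_abs, sq_abs]; nlinarith [hs]]
  exact Real.sqrt_sq h0

lemma norm_spherePt (r : ℝ) (h0 : 0 ≤ r) (h2 : r ≤ 2) : ‖spherePt r‖ = 1 := by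
  have h4 : (0:ℝ) ≤ 1 - r^2/4 := by nlinarith
  have hs := Real.sq_sqrt h4
  rw [EuclideanSpace.norm_eq]
  simp only [spherePt, WithLp.equiv_symm_apply, WithLp.ofLp_toLp, PiLp.toLp_apply, Fin.sum_univ_three,
    Matrix.cons_val_zero, Matrix.cons_val_one, Matrix.head_cons,
    Matrix.cons_val_two, Matrix.tail_cons, Real.norm_eq_abs]
  rw [show |1 - r ^ 2 / 2| ^ 2 + |r * √(1 - r ^ 2 / 4)| ^ 2 + |(0:ℝ)| ^ 2 = 1 from by
    rw [sq_abs, sq_abs, sq_abs]; nlinarith [hs]]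
  exact Real.sqrt_one

lemma inner_spherePt (r : ℝ) :
    (inner ℝ (spherePt 0) (spherePt r) : ℝ) = 1 - r ^ 2 / 2 := by
  simp only [spherePt, PiLp.inner_apply, WithLp.equiv_symm_apply, WithLp.ofLp_toLp, PiLp.toLp_apply, Fin.sum_univ_three,
    Matrix.cons_val_zero, Matrix.cons_val_one, Matrix.head_cons,
    Matrix.cons_val_two, Matrix.tail_cons, RCLike.inner_apply, conj_trivial]
  ring_nf

lemma angle_spherePt (r : ℝ) (h0 : 0 ≤ r) (h2 : r ≤ 2) :
    EuclideanGeometry.angle (spherePt 0) (0 : EuclideanSpace ℝ (Fin 3)) (spherePt r)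
      = Real.arccos (1 - r ^ 2 / 2) := by
  rw [EuclideanGeometry.angle, InnerProductGeometry.angle]
  simp only [vsub_eq_sub, sub_zero]
  rw [inner_spherePt, norm_spherePt 0 le_rfl (by norm_num), norm_spherePt r h0 h2]
  norm_num

lemma sqrt_ge (t : ℝ) (ht0 : 0 < t) (ht1 : t ≤ 1) : t ≤ Real.sqrt (2 - t ^ 2) := by
  have : t = Real.sqrt (t ^ 2) := (Real.sqrt_sq ht0.le).symm
  rw [this]
  exact Real.sqrt_le_sqrt (by nlinarith)

lemma cos_thresh (t : ℝ) (ht0 : 0 < t) (ht1 : t ≤ 1) :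
    Real.cos (Real.pi - 2 * alphaAngle t) = -(t * Real.sqrt (2 - t ^ 2)) := by
  have h2t : (0:ℝ) ≤ 2 - t ^ 2 := by nlinarith
  have hs := Real.sq_sqrt h2t
  set s := (Real.sqrt (2 - t ^ 2) - t) / 2 with hsdef
  have hs0 : 0 ≤ s := by
    have := sqrt_ge t ht0 ht1; simp only [hsdef]; linarith
  have hs1 : s ≤ 1 := by
    have : Real.sqrt (2 - t ^ 2) ≤ Real.sqrt 2 := Real.sqrt_le_sqrt (by nlinarith)
    have h2 : Real.sqrt 2 ≤ 2 := by
      nlinarith [Real.sq_sqrt (by norm_num : (0:ℝ) ≤ 2), Real.sqrt_nonneg 2]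
    simp only [hsdef]; nlinarith
  rw [Real.cos_pi_sub, alphaAngle, Real.cos_two_mul, Real.cos_arcsin]
  rw [Real.sq_sqrt (by nlinarith : (0:ℝ) ≤ 1 - s ^ 2)]
  simp only [hsdef]
  nlinarith [hs]

lemma alpha_nonneg (t : ℝ) (ht0 : 0 < t) (ht1 : t ≤ 1) : 0 ≤ alphaAngle t :=
  Real.arcsin_nonneg.2 (by linarith [sqrt_ge t ht0 ht1])

lemma thresh_mem (t : ℝ) (ht0 : 0 < t) (ht1 : t ≤ 1) :
    0 ≤ Real.pi - 2 * alphaAngle t ∧ Real.pi - 2 * alphaAngle t ≤ Real.pi := by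
  constructor
  · have := Real.arcsin_le_pi_div_two ((Real.sqrt (2 - t ^ 2) - t) / 2)
    have hpi := Real.pi_pos
    unfold alphaAngle; linarith
  · linarith [alpha_nonneg t ht0 ht1]

lemma dtChord_nonneg (t r : ℝ) (ht0 : 0 < t) : 0 ≤ dtChord t r := by
  unfold dtChord dt
  split
  · exact dist_nonneg
  · positivity

lemma dtChord_eq (t r : ℝ) (ht0 : 0 < t) (ht1 : t ≤ 1) (h0 : 0 ≤ r) (h2 : r ≤ 2 * t) :
    dtChord t r = r := by
  have h2t : (0:ℝ) ≤ 2 - t ^ 2 := by nlinarith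
  have hs := Real.sq_sqrt h2t
  have hr2 : r ≤ 2 := by linarith
  unfold dtChord dt
  rw [if_pos, dist_spherePt r h0 hr2]
  rw [angle_spherePt r h0 hr2]
  have hkey : -(t * Real.sqrt (2 - t ^ 2)) ≤ 1 - r ^ 2 / 2 := by
    nlinarith [sqrt_ge t ht0 ht1, Real.sqrt_nonneg (2 - t ^ 2)]
  calc Real.arccos (1 - r ^ 2 / 2)
      ≤ Real.arccos (-(t * Real.sqrt (2 - t ^ 2))) := _root_.antitone_arccos hkey
    _ = Real.pi - 2 * alphaAngle t := by
        rw [← cos_thresh t ht0 ht1,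
          Real.arccos_cos (thresh_mem t ht0 ht1).1 (thresh_mem t ht0 ht1).2]

lemma dtChord_cases (t r : ℝ) (ht0 : 0 < t) (h0 : 0 ≤ r) (h2 : r ≤ 2) :
    dtChord t r = r ∨ 2 * t ≤ dtChord t r := by
  unfold dtChord dt
  split
  · exact Or.inl (dist_spherePt r h0 h2)
  · right
    linarith [dist_nonneg (x := -spherePt 0) (y := spherePt r)]

set_option maxHeartbeats 1000000 in
theorem rho_eq_dist_of_dist_lt (t : ℝ) (ht0 : 0 < t) (ht1 : t ≤ 1)
    (P Q : EuclideanSpace ℝ (Fin 3)) (h : dist P Q < 2 * t) :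
    rho t P Q = dist P Q := by
  have hd2 : dist P Q ≤ 2 := by linarith
  have hmem : dist P Q ∈ chainSums t P Q := by
    have h0 : (![P, Q] : Fin 2 → EuclideanSpace ℝ (Fin 3)) 0 = P := rfl
    have h1 : (![P, Q] : Fin 2 → EuclideanSpace ℝ (Fin 3)) (Fin.last 1) = Q := rfl
    refine ⟨1, ![P, Q], h0, h1, ?_, ?_⟩
    · intro i
      fin_cases i
      simpa using hd2
    · rw [Fin.sum_univ_one]
      have he : dist ((![P, Q]) (0 : Fin 1).castSucc) ((![P, Q]) (0 : Fin 1).succ)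
          = dist P Q := by simp
      rw [he, dtChord_eq t _ ht0 ht1 dist_nonneg h.le]
  have hlb : ∀ s ∈ chainSums t P Q, dist P Q ≤ s := by
    rintro s ⟨n, X, hX0, hXn, hle, rfl⟩
    by_cases hall : ∀ i : Fin n,
        dtChord t (dist (X i.castSucc) (X i.succ)) = dist (X i.castSucc) (X i.succ)
    · set f : ℕ → EuclideanSpace ℝ (Fin 3) :=
        fun k => X ⟨min k n, Nat.lt_succ_of_le (min_le_right _ _)⟩ with hf
      have hf0 : f 0 = P := by
        rw [hf, ← hX0]; exact congrArg X (Fin.ext (by simp))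

      have hfn : f n = Q := by
        rw [hf, ← hXn]; exact congrArg X (Fin.ext (by simp [Fin.last]))
      calc dist P Q = dist (f 0) (f n) := by rw [hf0, hfn]
        _ ≤ ∑ i ∈ Finset.range n, dist (f i) (f (i + 1)) := dist_le_range_sum_dist f n
        _ = ∑ i : Fin n, dist (f i) (f (i + 1)) :=
            (Fin.sum_univ_eq_sum_range (fun i => dist (f i) (f (i + 1))) n).symm
        _ = ∑ i : Fin n, dtChord t (dist (X i.castSucc) (X i.succ)) := by
            refine Finset.sum_congr rfl (fun i _ => ?_)
            rw [hall i]
            congr 1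
            · rw [hf]; exact congrArg X (Fin.ext (by simp [Nat.min_eq_left i.isLt.le]))
            · rw [hf]; exact congrArg X (Fin.ext (by simp [Fin.val_succ, Nat.min_eq_left i.isLt]))
    · push_neg at hall
      obtain ⟨i, hi⟩ := hall
      have hfar : 2 * t ≤ dtChord t (dist (X i.castSucc) (X i.succ)) := by
        rcases dtChord_cases t (dist (X i.castSucc) (X i.succ)) ht0 dist_nonneg (hle i) with
          hc | hc
        · exact absurd hc hi
        · exact hc
      calc dist P Q ≤ 2 * t := h.le
        _ ≤ dtChord t (dist (X i.castSucc) (X i.succ)) := hfar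
        _ ≤ ∑ j : Fin n, dtChord t (dist (X j.castSucc) (X j.succ)) :=
            Finset.single_le_sum (f := fun j : Fin n => dtChord t (dist (X j.castSucc) (X j.succ)))
              (fun j _ => dtChord_nonneg t _ ht0) (Finset.mem_univ i)
  refine le_antisymm ?_ (le_csInf ⟨_, hmem⟩ hlb)
  exact csInf_le ⟨dist P Q, fun s hs => hlb s hs⟩ hmem
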